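/- Let a,b ∈ [0,1] with b ≠ 1, a ≠ b and 0 ≤ a < 1 − (1−b)²/4, and let x_* = (1−b+2a−√((1−b)²+4a)) / (2(a−b)) be the unique fixed point coordinate of the symmetric operator T. Then there exists an open neighborhood U of (x_*, x_*) in [0,1]² such that for every initial point (x^{(0)},y^{(0)}) ∈ U, lim_{n→∞} T^n(x^{(0)},y^{(0)}) = (x_*, x_*). -/

import Mathlib

/-!
In the coordinates `s = x + y − 2x₀`, `q = x − y` centred at the fixed point `(x₀, x₀)`, the
operator acts by `q ↦ b q` and `s ↦ λ s − (b − a)(s² − q²)/2` with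
`λ = (b − a)(1 − 2x₀) − a = 1 − √((1−b)² + 4a)`.
Both `|b|` and `|λ|` are below `1`, so on a small enough region `max |s| |q| ≤ r` the quadratic
term is dominated and `max |s| |q|` shrinks by a fixed factor `k < 1` at each step.
-/

open Filter Topology

/-- The symmetric evolution operator `T(x,y) = ((1−y)(a+(b−a)x), (1−x)(a+(b−a)y))`. -/
def opT (a b : ℝ) (p : ℝ × ℝ) : ℝ × ℝ :=
  ((1 - p.2) * (a + (b - a) * p.1), (1 - p.1) * (a + (b - a) * p.2))

section Lyapunov

variable {X : Type*} {f : X → X} {V : X → ℝ} {k r : ℝ}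

theorem iterate_le_pow_mul_of_le_mul (hV : ∀ p, 0 ≤ V p) (hk0 : 0 ≤ k) (hk1 : k ≤ 1)
    (hf : ∀ p, V p ≤ r → V (f p) ≤ k * V p) {p : X} (hp : V p ≤ r) (n : ℕ) :
    V (f^[n] p) ≤ k ^ n * V p := by
  induction n with
  | zero => simp
  | succ n ih =>
    have hr : V (f^[n] p) ≤ r :=
      ih.trans <| (mul_le_of_le_one_left (hV p) (pow_le_one₀ hk0 hk1)).trans hp
    calc V (f^[n + 1] p) = V (f (f^[n] p)) := by rw [Function.iterate_succ_apply']
      _ ≤ k * V (f^[n] p) := hf _ hr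
      _ ≤ k * (k ^ n * V p) := mul_le_mul_of_nonneg_left ih hk0
      _ = k ^ (n + 1) * V p := by ring

theorem tendsto_iterate_of_le_mul [PseudoMetricSpace X] {x₀ : X}
    (hdist : ∀ p, dist p x₀ ≤ V p) (hV : ∀ p, 0 ≤ V p) (hk0 : 0 ≤ k) (hk1 : k < 1)
    (hf : ∀ p, V p ≤ r → V (f p) ≤ k * V p) {p : X} (hp : V p ≤ r) :
    Tendsto (fun n => f^[n] p) atTop (𝓝 x₀) := by
  rw [tendsto_iff_dist_tendsto_zero]
  refine squeeze_zero (fun _ => dist_nonneg)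
    (fun n => (hdist _).trans (iterate_le_pow_mul_of_le_mul hV hk0 hk1.le hf hp n)) ?_
  simpa using (tendsto_pow_atTop_nhds_zero_of_lt_one hk0 hk1).mul_const (V p)

end Lyapunov

/-- The sup-norm of `p − (c, c)` in the eigenbasis `(1, 1)`, `(1, −1)` of the linearisation of
`opT a b` at `(c, c)`. -/
def diagDev (c : ℝ) (p : ℝ × ℝ) : ℝ :=
  max |p.1 + p.2 - 2 * c| |p.1 - p.2|

theorem diagDev_nonneg (c : ℝ) (p : ℝ × ℝ) : 0 ≤ diagDev c p :=
  (abs_nonneg _).trans (le_max_right _ _)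

theorem continuous_diagDev (c : ℝ) : Continuous (diagDev c) := by
  unfold diagDev; fun_prop

theorem diagDev_self (c : ℝ) : diagDev c (c, c) = 0 := by
  simp [diagDev, two_mul]

theorem dist_le_diagDev (c : ℝ) (p : ℝ × ℝ) : dist p (c, c) ≤ diagDev c p := by
  obtain ⟨hs, hs'⟩ := abs_le.mp (le_max_left |p.1 + p.2 - 2 * c| |p.1 - p.2|)
  obtain ⟨hq, hq'⟩ := abs_le.mp (le_max_right |p.1 + p.2 - 2 * c| |p.1 - p.2|)
  rw [Prod.dist_eq, Real.dist_eq, Real.dist_eq, diagDev]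
  exact max_le (abs_le.mpr ⟨by linarith, by linarith⟩) (abs_le.mpr ⟨by linarith, by linarith⟩)

theorem opT_fst_sub_snd (a b : ℝ) (p : ℝ × ℝ) :
    (opT a b p).1 - (opT a b p).2 = b * (p.1 - p.2) := by
  simp only [opT]; ring

theorem opT_fst_add_snd_sub {a b c : ℝ} (hc : (1 - c) * (a + (b - a) * c) = c) (p : ℝ × ℝ) :
    (opT a b p).1 + (opT a b p).2 - 2 * c =
      ((b - a) * (1 - 2 * c) - a) * (p.1 + p.2 - 2 * c)
        - (b - a) * ((p.1 + p.2 - 2 * c) ^ 2 - (p.1 - p.2) ^ 2) / 2 := by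
  simp only [opT]; linear_combination 2 * hc

theorem diagDev_opT_le {a b c k r : ℝ} (hc : (1 - c) * (a + (b - a) * c) = c)
    (hlin : |(b - a) * (1 - 2 * c) - a| + |b - a| * r / 2 ≤ k) (hb : |b| ≤ k)
    {p : ℝ × ℝ} (hp : diagDev c p ≤ r) : diagDev c (opT a b p) ≤ k * diagDev c p := by
  set s := p.1 + p.2 - 2 * c
  set q := p.1 - p.2
  set M := diagDev c p
  have hs : |s| ≤ M := le_max_left _ _
  have hq : |q| ≤ M := le_max_right _ _
  have hM : 0 ≤ M := diagDev_nonneg c p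
  have hsq : |s ^ 2 - q ^ 2| ≤ r * M := by
    have hs2 : s ^ 2 ≤ M ^ 2 := sq_le_sq' (abs_le.mp hs).1 (abs_le.mp hs).2
    have hq2 : q ^ 2 ≤ M ^ 2 := sq_le_sq' (abs_le.mp hq).1 (abs_le.mp hq).2
    have hMr : M ^ 2 ≤ r * M := by nlinarith
    exact abs_le.mpr ⟨by nlinarith [sq_nonneg s], by nlinarith [sq_nonneg q]⟩
  refine max_le ?_ ?_
  · rw [opT_fst_add_snd_sub hc]
    calc |((b - a) * (1 - 2 * c) - a) * s - (b - a) * (s ^ 2 - q ^ 2) / 2|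
        ≤ |(b - a) * (1 - 2 * c) - a| * |s| + |b - a| * |s ^ 2 - q ^ 2| / 2 := by
          refine (abs_sub _ _).trans_eq ?_
          rw [abs_mul, abs_div, abs_mul, abs_two]
      _ ≤ |(b - a) * (1 - 2 * c) - a| * M + |b - a| * (r * M) / 2 := by gcongr
      _ = (|(b - a) * (1 - 2 * c) - a| + |b - a| * r / 2) * M := by ring
      _ ≤ k * M := by gcongr
  · rw [opT_fst_sub_snd, abs_mul]
    exact mul_le_mul hb hq (abs_nonneg _) ((abs_nonneg _).trans hb)

theorem exists_diagDev_opT_contraction {a b c : ℝ} (hc : (1 - c) * (a + (b - a) * c) = c)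
    (hlin : |(b - a) * (1 - 2 * c) - a| < 1) (hb : |b| < 1) :
    ∃ r > 0, ∃ k, 0 ≤ k ∧ k < 1 ∧
      ∀ p, diagDev c p ≤ r → diagDev c (opT a b p) ≤ k * diagDev c p := by
  set m := max |(b - a) * (1 - 2 * c) - a| |b|
  have hm : m < 1 := max_lt hlin hb
  have hm0 : 0 ≤ m := (abs_nonneg b).trans (le_max_right _ _)
  set r := (1 - m) / (|b - a| + 1)
  have hr : |b - a| * r ≤ 1 - m := by
    rw [mul_div_assoc', div_le_iff₀ (by positivity)]
    nlinarith [abs_nonneg (b - a)]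
  refine ⟨r, div_pos (by linarith) (by positivity), (1 + m) / 2, by linarith, by linarith,
    fun p hp => diagDev_opT_le hc ?_ ?_ hp⟩
  · linarith [le_max_left |(b - a) * (1 - 2 * c) - a| |b|]
  · linarith [le_max_right |(b - a) * (1 - 2 * c) - a| |b|]

theorem opT_diag_fixed {a b c : ℝ} (hab : a ≠ b) (hdisc : 0 ≤ (1 - b) ^ 2 + 4 * a)
    (hc : 2 * (a - b) * c = 1 - b + 2 * a - √((1 - b) ^ 2 + 4 * a)) :
    (1 - c) * (a + (b - a) * c) = c := by
  have hD := Real.sq_sqrt hdisc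
  have hab' : 4 * (a - b) ^ 2 ≠ 0 := by
    have := sub_ne_zero.mpr hab
    positivity
  refine sub_eq_zero.mp ((mul_eq_zero.mp ?_).resolve_left hab')
  linear_combination (a - b) * hD
    + (a - b) * (2 * (a - b) * c - (1 - b + 2 * a) - √((1 - b) ^ 2 + 4 * a)) * hc

theorem abs_one_sub_sqrt_lt_one {x : ℝ} (hx0 : 0 < x) (hx4 : x < 4) : |1 - √x| < 1 := by
  have hpos : 0 < √x := Real.sqrt_pos.mpr hx0
  have hlt : √x < 2 := (Real.sqrt_lt' two_pos).mpr (by norm_num; exact hx4)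
  exact abs_lt.mpr ⟨by linarith, by linarith⟩

/-- If `b ≠ 1`, `a ≠ b` and `0 ≤ a < 1 − (1−b)²/4`, then the fixed point `(x₀,x₀)`,
`x₀ = (1−b+2a−√((1−b)²+4a))/(2(a−b))`, attracts a neighborhood of itself in `[0,1]²`. -/
theorem opT_sym_attracting_fixed_point (a b : ℝ) (ha : a ∈ Set.Icc (0 : ℝ) 1)
    (hb : b ∈ Set.Icc (0 : ℝ) 1) (hb1 : b ≠ 1) (hab : a ≠ b)
    (ha2 : a < 1 - (1 - b) ^ 2 / 4) :
    ∃ U : Set (ℝ × ℝ), IsOpen U ∧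
      ((1 - b + 2 * a - Real.sqrt ((1 - b) ^ 2 + 4 * a)) / (2 * (a - b)),
        (1 - b + 2 * a - Real.sqrt ((1 - b) ^ 2 + 4 * a)) / (2 * (a - b))) ∈ U ∧
      ∀ p ∈ U ∩ Set.Icc (0 : ℝ) 1 ×ˢ Set.Icc (0 : ℝ) 1,
        Tendsto (fun n : ℕ => (opT a b)^[n] p) atTop
          (𝓝 ((1 - b + 2 * a - Real.sqrt ((1 - b) ^ 2 + 4 * a)) / (2 * (a - b)),
            (1 - b + 2 * a - Real.sqrt ((1 - b) ^ 2 + 4 * a)) / (2 * (a - b)))) := by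
  obtain ⟨ha0, -⟩ := ha
  obtain ⟨hb0, hb1'⟩ := hb
  have hb_lt : b < 1 := lt_of_le_of_ne hb1' hb1
  have hdisc : 0 < (1 - b) ^ 2 + 4 * a := by nlinarith [pow_pos (sub_pos.mpr hb_lt) 2]
  set D := √((1 - b) ^ 2 + 4 * a)
  set x₀ := (1 - b + 2 * a - D) / (2 * (a - b))
  have hx₀ : 2 * (a - b) * x₀ = 1 - b + 2 * a - D :=
    mul_div_cancel₀ _ (mul_ne_zero two_ne_zero (sub_ne_zero.mpr hab))
  have hfix := opT_diag_fixed hab hdisc.le hx₀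
  have hlin : |(b - a) * (1 - 2 * x₀) - a| < 1 := by
    rw [show (b - a) * (1 - 2 * x₀) - a = 1 - D by linear_combination hx₀]
    exact abs_one_sub_sqrt_lt_one hdisc (by linarith)
  obtain ⟨r, hr, k, hk0, hk1, hstep⟩ :=
    exists_diagDev_opT_contraction hfix hlin (abs_lt.mpr ⟨by linarith, hb_lt⟩)
  refine ⟨{p | diagDev x₀ p < r}, isOpen_lt (continuous_diagDev x₀) continuous_const,
    by simpa only [Set.mem_ofPred_eq, diagDev_self] using hr, fun p hp => ?_⟩
  exact tendsto_iterate_of_le_mul (dist_le_diagDev x₀) (diagDev_nonneg x₀) hk0 hk1 hstep hp.1.le
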